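/- Let S be a string. For every ρ-periodic substring S[i..j] of S, there is exactly one ρ-periodic run S[ℓ..r] of S with ℓ ≤ i and j ≤ r. -/
import Mathlib


variable {α : Type*}

/-- `sub S i j` is the substring `S[i..j]` (1-indexed, inclusive endpoints). -/
def sub (S : List α) (i j : ℕ) : List α := (S.take j).drop (i - 1)

/-- `ρ` is a period of `T`: `1 ≤ ρ` and `T[i] = T[i+ρ]` for all valid `i`. -/
def IsPeriod (T : List α) (ρ : ℕ) : Prop :=
  1 ≤ ρ ∧ ∀ i : ℕ, i + ρ < T.length → T[i]? = T[i + ρ]?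

/-- The minimal period of `T`. -/
noncomputable def per (T : List α) : ℕ := sInf {ρ : ℕ | IsPeriod T ρ}

/-- `S[ℓ..r]` is a `ρ`-periodic run of `S`. -/
def IsRun (S : List α) (ρ ℓ r : ℕ) : Prop :=
  1 ≤ ℓ ∧ ℓ ≤ r ∧ r ≤ S.length ∧
  per (sub S ℓ r) = ρ ∧ 2 * ρ ≤ r - ℓ + 1 ∧
  ∀ ℓ' r' : ℕ, 1 ≤ ℓ' → ℓ' ≤ ℓ → r ≤ r' → r' ≤ S.length →
    per (sub S ℓ' r') = ρ → 2 * ρ ≤ r' - ℓ' + 1 → ℓ' = ℓ ∧ r' = r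

lemma sub_length (S : List α) (ℓ r : ℕ) (hr : r ≤ S.length) :
    (sub S ℓ r).length = r - (ℓ - 1) := by
  simp [sub]; omega

lemma sub_getElem? (S : List α) (ℓ r k : ℕ) (h : ℓ - 1 + k < r) :
    (sub S ℓ r)[k]? = S[ℓ - 1 + k]? := by
  simp [sub, List.getElem?_drop, List.getElem?_take, h]

lemma isPeriod_sub_iff (S : List α) (ℓ r ρ' : ℕ) (hr : r ≤ S.length) :
    IsPeriod (sub S ℓ r) ρ' ↔
      1 ≤ ρ' ∧ ∀ k : ℕ, ℓ - 1 + k + ρ' < r → S[ℓ - 1 + k]? = S[ℓ - 1 + k + ρ']? := by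
  rw [IsPeriod, sub_length S ℓ r hr]
  constructor
  · rintro ⟨h1, h2⟩
    refine ⟨h1, fun k hk => ?_⟩
    have := h2 k (by omega)
    rwa [sub_getElem? S ℓ r k (by omega), sub_getElem? S ℓ r (k + ρ') (by omega),
      show ℓ - 1 + (k + ρ') = ℓ - 1 + k + ρ' by omega] at this
  · rintro ⟨h1, h2⟩
    refine ⟨h1, fun k hk => ?_⟩
    rw [sub_getElem? S ℓ r k (by omega), sub_getElem? S ℓ r (k + ρ') (by omega),
      show ℓ - 1 + (k + ρ') = ℓ - 1 + k + ρ' by omega]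
    exact h2 k (by omega)

/-- Periods restrict to substrings (stated for nested intervals of `S`). -/
lemma isPeriod_sub_mono (S : List α) (ℓ r ℓ' r' ρ' : ℕ) (hℓ' : 1 ≤ ℓ') (hℓ : ℓ' ≤ ℓ)
    (hr : r ≤ r') (hr' : r' ≤ S.length) (hp : IsPeriod (sub S ℓ' r') ρ') :
    IsPeriod (sub S ℓ r) ρ' := by
  rw [isPeriod_sub_iff S ℓ' r' ρ' hr'] at hp
  rw [isPeriod_sub_iff S ℓ r ρ' (le_trans hr hr')]
  refine ⟨hp.1, fun k hk => ?_⟩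
  have := hp.2 (k + (ℓ - ℓ')) (by omega)
  rwa [show ℓ' - 1 + (k + (ℓ - ℓ')) = ℓ - 1 + k by omega] at this

lemma periods_nonempty (T : List α) : {ρ' : ℕ | IsPeriod T ρ'}.Nonempty :=
  ⟨T.length + 1, le_add_self, fun i h => absurd h (by omega)⟩

lemma isPeriod_per (T : List α) : IsPeriod T (per T) :=
  Nat.sInf_mem (periods_nonempty T)

/-- For every `ρ`-periodic substring `S[i..j]` of `S`, there is exactly one
`ρ`-periodic run `S[ℓ..r]` of `S` with `ℓ ≤ i` and `j ≤ r`. -/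
theorem stmt7 (S : List α) (ρ i j : ℕ)
    (hi : 1 ≤ i) (hij : i ≤ j) (hj : j ≤ S.length)
    (hper : per (sub S i j) = ρ) (hlen : 2 * ρ ≤ j - i + 1) :
    ∃! p : ℕ × ℕ, IsRun S ρ p.1 p.2 ∧ p.1 ≤ i ∧ j ≤ p.2 := by
  classical
  have hρ_ij : IsPeriod (sub S i j) ρ := hper ▸ isPeriod_per _
  have hρpos : 1 ≤ ρ := hρ_ij.1
  -- leftmost extension
  set L : Set ℕ := {ℓ | 1 ≤ ℓ ∧ ℓ ≤ i ∧ IsPeriod (sub S ℓ j) ρ} with hL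
  have hiL : i ∈ L := ⟨hi, le_refl i, hρ_ij⟩
  set l : ℕ := sInf L with hl
  obtain ⟨hl1, hli, hlper⟩ : l ∈ L := Nat.sInf_mem ⟨i, hiL⟩
  -- rightmost extension
  set P : ℕ → Prop := fun r => j ≤ r ∧ IsPeriod (sub S i r) ρ with hP
  have hPj : P j := ⟨le_refl j, hρ_ij⟩
  set r : ℕ := Nat.findGreatest P S.length with hr
  obtain ⟨hjr, hrper⟩ : P r := by
    have := Nat.findGreatest_spec hj hPj
    exact this
  have hrS : r ≤ S.length := Nat.findGreatest_le S.length
  have hrmax : ∀ r', r' ≤ S.length → P r' → r' ≤ r :=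
    fun r' h1 h2 => Nat.le_findGreatest h1 h2
  -- glue: ρ is a period of sub S l r
  have hglue : IsPeriod (sub S l r) ρ := by
    rw [isPeriod_sub_iff S l j ρ hj] at hlper
    rw [isPeriod_sub_iff S i r ρ hrS] at hrper
    rw [isPeriod_sub_iff S l r ρ hrS]
    refine ⟨hρpos, fun k hk => ?_⟩
    by_cases hcase : l - 1 + k + ρ < j
    · exact hlper.2 k hcase
    · have := hrper.2 (l - 1 + k - (i - 1)) (by omega)
      rwa [show i - 1 + (l - 1 + k - (i - 1)) = l - 1 + k by omega] at this
  -- the minimal period of any extension is ρ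
  have hper_ext : ∀ ℓ' r', 1 ≤ ℓ' → ℓ' ≤ i → j ≤ r' → r' ≤ S.length →
      IsPeriod (sub S ℓ' r') ρ → per (sub S ℓ' r') = ρ := by
    intro ℓ' r' h1 h2 h3 h4 h5
    refine le_antisymm (Nat.sInf_le h5) ?_
    have hmem : IsPeriod (sub S ℓ' r') (per (sub S ℓ' r')) := isPeriod_per _
    have : IsPeriod (sub S i j) (per (sub S ℓ' r')) :=
      isPeriod_sub_mono S i j ℓ' r' _ h1 h2 h3 h4 hmem
    calc ρ = per (sub S i j) := hper.symm
      _ ≤ per (sub S ℓ' r') := Nat.sInf_le this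
  have hlr : l ≤ r := le_trans hli (le_trans hij hjr)
  have hlen' : 2 * ρ ≤ r - l + 1 := by omega
  have hrun : IsRun S ρ l r := by
    refine ⟨hl1, hlr, hrS, hper_ext l r hl1 hli hjr hrS hglue, hlen', ?_⟩
    intro ℓ' r' h1 h2 h3 h4 h5 h6
    have hρ' : IsPeriod (sub S ℓ' r') ρ := h5 ▸ isPeriod_per _
    have hℓ'L : ℓ' ∈ L := ⟨h1, le_trans h2 hli,
      isPeriod_sub_mono S ℓ' j ℓ' r' ρ h1 le_rfl (le_trans hjr h3) h4 hρ'⟩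
    have hr'P : P r' := ⟨le_trans hjr h3,
      isPeriod_sub_mono S i r' ℓ' r' ρ h1 (le_trans h2 hli) le_rfl h4 hρ'⟩
    exact ⟨le_antisymm h2 (Nat.sInf_le hℓ'L), le_antisymm (hrmax r' h4 hr'P) h3⟩
  refine ⟨(l, r), ⟨hrun, hli, hjr⟩, ?_⟩
  rintro ⟨ℓ', r'⟩ ⟨⟨h1, h2, h3, h4, h5, hmax⟩, h6, h7⟩
  have hρ' : IsPeriod (sub S ℓ' r') ρ := h4 ▸ isPeriod_per _
  have hℓ'L : ℓ' ∈ L := ⟨h1, h6,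
    isPeriod_sub_mono S ℓ' j ℓ' r' ρ h1 le_rfl h7 h3 hρ'⟩
  have hr'P : P r' := ⟨h7, isPeriod_sub_mono S i r' ℓ' r' ρ h1 h6 le_rfl h3 hρ'⟩
  have hll : l ≤ ℓ' := Nat.sInf_le hℓ'L
  have hrr : r' ≤ r := hrmax r' h3 hr'P
  obtain ⟨e1, e2⟩ := hmax l r hl1 hll hrr hrS (hper_ext l r hl1 hli hjr hrS hglue) hlen'
  simp [e1, e2]
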